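/- arXiv:2403.15104 — 10 statements merged into one kernel-verified Lean document; each statement's English description precedes it below -/
import Mathlib

section
/- Let F be a field with char F ≠ 2, and let A be a 2-dimensional F-algebra with basis (e_1, e_2) and matrix of structure constants A = ((α_1, α_2, 1+α_2, α_4), (β_1, -α_1, 1-α_1, -α_2)) for parameters α_1, α_2, α_4, β_1 ∈ F; that is, e_1e_1 = α_1 e_1 + β_1 e_2, e_1e_2 = α_2 e_1 - α_1 e_2, e_2e_1 = (1+α_2) e_1 + (1-α_1) e_2, e_2e_2 = α_4 e_1 - α_2 e_2. Then every derivation of A is zero. -/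
/-- Over a field of characteristic ≠ 2, the two-dimensional algebra A₁(c) with
e₁e₁ = α₁e₁ + β₁e₂, e₁e₂ = α₂e₁ - α₁e₂, e₂e₁ = (1+α₂)e₁ + (1-α₁)e₂,
e₂e₂ = α₄e₁ - α₂e₂ has only the zero derivation. -/
theorem stmt_4 {F : Type*} [Field F] (hchar : ringChar F ≠ 2)
    (α₁ α₂ α₄ β₁ : F)
    (mul : (Fin 2 → F) → (Fin 2 → F) → (Fin 2 → F))
    (hmul : ∀ x y, mul x y =
      (x 0 * y 0) • ![α₁, β₁] + (x 0 * y 1) • ![α₂, -α₁]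
      + (x 1 * y 0) • ![1 + α₂, 1 - α₁] + (x 1 * y 1) • ![α₄, -α₂])
    (D : (Fin 2 → F) →ₗ[F] (Fin 2 → F))
    (hD : ∀ x y, D (mul x y) = mul (D x) y + mul x (D y)) :
    D = 0 := by
  have hrep : ∀ v : Fin 2 → F, v = v 0 • ![(1:F),0] + v 1 • ![(0:F),1] := by
    intro v; funext i; fin_cases i <;> simp
  have hDrep : ∀ v : Fin 2 → F, D v = v 0 • D ![(1:F),0] + v 1 • D ![(0:F),1] := by
    intro v
    conv_lhs => rw [hrep v]
    rw [map_add, map_smul, map_smul]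
  set a := D ![(1:F),0] 0 with ha
  set b := D ![(1:F),0] 1 with hb
  set c := D ![(0:F),1] 0 with hc
  set d := D ![(0:F),1] 1 with hd
  -- extract the 8 scalar equations
  have key : ∀ (x y : Fin 2 → F) (i : Fin 2),
      (x 0 * y 0 * (D x 0) ) = (x 0 * y 0 * (D x 0)) := fun _ _ _ => rfl
  have eqn : ∀ (x y : Fin 2 → F) (i : Fin 2),
      ((mul x y) 0 • D ![(1:F),0] + (mul x y) 1 • D ![(0:F),1]) i
        = (mul (D x) y + mul x (D y)) i := by
    intro x y i
    rw [← hDrep, hD]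
  have E := fun (x y : Fin 2 → F) (i : Fin 2) => eqn x y i
  have e1 : ∀ i : Fin 2, (![(1:F),0] : Fin 2 → F) i = ![(1:F),0] i := fun _ => rfl
  -- now instantiate at basis vectors
  have h00_0 := eqn ![(1:F),0] ![(1:F),0] 0
  have h00_1 := eqn ![(1:F),0] ![(1:F),0] 1
  have h01_0 := eqn ![(1:F),0] ![(0:F),1] 0
  have h01_1 := eqn ![(1:F),0] ![(0:F),1] 1
  have h10_0 := eqn ![(0:F),1] ![(1:F),0] 0
  have h10_1 := eqn ![(0:F),1] ![(1:F),0] 1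
  have h11_0 := eqn ![(0:F),1] ![(0:F),1] 0
  have h11_1 := eqn ![(0:F),1] ![(0:F),1] 1
  simp only [hmul, Pi.add_apply, Pi.smul_apply, Matrix.cons_val_zero, Matrix.cons_val_one,
    Matrix.head_cons, smul_eq_mul, ← ha, ← hb, ← hc, ← hd, one_mul, mul_one, zero_mul,
    mul_zero, add_zero, zero_add, zero_smul, mul_neg, Pi.zero_apply] at h00_0 h00_1 h01_0 h01_1 h10_0 h10_1 h11_0 h11_1
  have hb0 : b = 0 := by linear_combination -h00_0 - h01_1
  have ha0 : a = 0 := by linear_combination -h00_0 - h10_1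
  have hc0 : c = 0 := by linear_combination -h01_0 - h11_1
  have hd0 : d = 0 := by linear_combination hc0 - h10_0 + h01_0
  have hDe1 : D ![(1:F),0] = 0 := by
    funext i; fin_cases i
    · exact ha0
    · exact hb0
  have hDe2 : D ![(0:F),1] = 0 := by
    funext i; fin_cases i
    · exact hc0
    · exact hd0
  apply LinearMap.ext
  intro v
  rw [hDrep v, hDe1, hDe2]
  simp
end

section
/- Let F be a field with char F ≠ 2, and let A be the 2-dimensional F-algebra with basis (e_1, e_2) and products e_1e_1 = α_1 e_1 + β_1 e_2, e_1e_2 = α_2 e_1 - α_1 e_2, e_2e_1 = (1+α_2) e_1 + (1-α_1) e_2, e_2e_2 = α_4 e_1 - α_2 e_2, for parameters α_1, α_2, α_4, β_1 ∈ F. Then the only algebra automorphism of A is the identity. -/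
/-- Over a field of characteristic ≠ 2, the two-dimensional algebra A₁(c) with
e₁e₁ = α₁e₁ + β₁e₂, e₁e₂ = α₂e₁ - α₁e₂, e₂e₁ = (1+α₂)e₁ + (1-α₁)e₂,
e₂e₂ = α₄e₁ - α₂e₂ has only the identity automorphism. -/
theorem stmt_5 {F : Type*} [Field F] (hchar : ringChar F ≠ 2)
    (α₁ α₂ α₄ β₁ : F)
    (mul : (Fin 2 → F) → (Fin 2 → F) → (Fin 2 → F))
    (hmul : ∀ x y, mul x y =
      (x 0 * y 0) • ![α₁, β₁] + (x 0 * y 1) • ![α₂, -α₁]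
      + (x 1 * y 0) • ![1 + α₂, 1 - α₁] + (x 1 * y 1) • ![α₄, -α₂])
    (g : (Fin 2 → F) ≃ₗ[F] (Fin 2 → F))
    (hg : ∀ x y, g (mul x y) = mul (g x) (g y)) :
    g = LinearEquiv.refl F (Fin 2 → F) := by
  have two_ne : (2 : F) ≠ 0 := Ring.two_ne_zero hchar
  -- decomposition of any vector
  have hdec : ∀ w : Fin 2 → F, w = w 0 • ![(1:F),0] + w 1 • ![(0:F),1] := by
    intro w; funext i; fin_cases i <;> simp
  have hgdec : ∀ w : Fin 2 → F, g w = w 0 • g ![(1:F),0] + w 1 • g ![(0:F),1] := by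
    intro w
    conv_lhs => rw [hdec w]
    rw [map_add, map_smul, map_smul]
  -- component equations
  have hcomp : ∀ a b : Fin 2 → F, ∀ i,
      mul a b 0 * g ![(1:F),0] i + mul a b 1 * g ![(0:F),1] i = mul (g a) (g b) i := by
    intro a b i
    have h := congrFun (hg a b) i
    rw [hgdec (mul a b)] at h
    simpa using h
  have E000 := hcomp ![(1:F),0] ![(1:F),0] 0
  have E001 := hcomp ![(1:F),0] ![(1:F),0] 1
  have E010 := hcomp ![(1:F),0] ![(0:F),1] 0
  have E011 := hcomp ![(1:F),0] ![(0:F),1] 1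
  have E100 := hcomp ![(0:F),1] ![(1:F),0] 0
  have E101 := hcomp ![(0:F),1] ![(1:F),0] 1
  have E110 := hcomp ![(0:F),1] ![(0:F),1] 0
  have E111 := hcomp ![(0:F),1] ![(0:F),1] 1
  simp only [hmul, Matrix.cons_val_zero, Matrix.cons_val_one, Matrix.head_cons,
    Pi.add_apply, Pi.smul_apply, smul_eq_mul, one_mul, zero_mul, mul_zero, mul_one,
    add_zero, zero_add] at E000 E001 E010 E011 E100 E101 E110 E111
  set p := g ![(1:F),0] 0 with hp
  set q := g ![(1:F),0] 1 with hq
  set r := g ![(0:F),1] 0 with hr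
  set s := g ![(0:F),1] 1 with hs
  -- basic relations
  have h1 : p + r = p * s - q * r := by linear_combination E100 - E010
  have h2 : q + s = p * s - q * r := by linear_combination E101 - E011
  have he : p + r = q + s := by linear_combination h1 - h2
  -- determinant nonzero
  have hD : p + r ≠ 0 := by
    intro h0
    have hz : g (![(1:F),0] + ![(0:F),1]) = 0 := by
      rw [map_add]
      funext i
      fin_cases i
      · simpa using h0
      · have hqs : q + s = 0 := by linear_combination h0 - he
        simpa using hqs
    have := g.injective (hz.trans (map_zero g).symm)
    have h01 := congrFun this 0
    simp at h01
  -- q = p - 1, s = r + 1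
  have hkey : (p - q) * (p + r) = 1 * (p + r) := by linear_combination p * he - h1
  have hq1 : q = p - 1 := by
    have := mul_right_cancel₀ hD hkey
    linear_combination -this
  have hs1 : s = r + 1 := by linear_combination -he - hq1
  simp only [hq1, hs1] at E000 E001 E010 E011 E110 E111
  -- endgame
  have hr0 : r = 0 := by
    by_contra hrne
    have g5 : (-r) * ((1 + α₄ + 2*α₂ + α₁) * (p + r + 1) - 1) = 0 := by
      linear_combination E010 + E110
    have K1 : (1 + α₄ + 2*α₂ + α₁) * (p + r + 1) = 1 := by
      rcases mul_eq_zero.mp g5 with h | h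
      · exact absurd (neg_eq_zero.mp h) hrne
      · linear_combination h
    have g4 : (-r) * (1 + (p - 1) * (1 + α₄ + 2*α₂ + α₁) + r * (1 + β₁ - α₂ - 2*α₁)) = 0 := by
      linear_combination E010 + E111
    have K2 : 1 + (p - 1) * (1 + α₄ + 2*α₂ + α₁) + r * (1 + β₁ - α₂ - 2*α₁) = 0 := by
      rcases mul_eq_zero.mp g4 with h | h
      · exact absurd (neg_eq_zero.mp h) hrne
      · exact h
    by_cases hp1 : p = 1
    · have ha : (-r) * (α₂ + 2*α₁) = 0 := by
        linear_combination E010 + (α₄ + r * (1 + α₄ + 2*α₂ + α₁)) * hp1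
      have ha' : α₂ + 2*α₁ = 0 :=
        (mul_eq_zero.mp ha).resolve_left (fun h => hrne (neg_eq_zero.mp h))
      have hb : r * β₁ = 0 := by
        linear_combination E000 + ((1 + α₄ + 2*α₂ + α₁) - α₄ + (p - 1) * (1 + α₄ + 2*α₂ + α₁)) * hp1
      have hb' : β₁ = 0 := (mul_eq_zero.mp hb).resolve_left hrne
      exact hD (by linear_combination K2 + (1 - (1 + α₄ + 2*α₂ + α₁)) * hp1 + r * ha' - r * hb')
    · have hx : p - 1 ≠ 0 := sub_ne_zero.mpr hp1
      have g6 : (p - 1) * (1 - (1 + β₁ - α₂ - 2*α₁) * (p + r + 1)) = 0 := by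
        linear_combination E001 + E011
      have K3 : (1 + β₁ - α₂ - 2*α₁) * (p + r + 1) = 1 := by
        have h := (mul_eq_zero.mp g6).resolve_left hx
        linear_combination -h
      have hpr1 : p + r + 1 ≠ 0 := by
        intro h
        exact one_ne_zero (α := F) (by rw [← K1, h, mul_zero])
      have hPQ : (1 + α₄ + 2*α₂ + α₁) = (1 + β₁ - α₂ - 2*α₁) := by
        have hz : ((1 + α₄ + 2*α₂ + α₁) - (1 + β₁ - α₂ - 2*α₁)) * (p + r + 1) = 0 := by
          linear_combination K1 - K3
        exact sub_eq_zero.mp ((mul_eq_zero.mp hz).resolve_right hpr1)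
      have h2P : 2 * ((1 + α₄ + 2*α₂ + α₁) - 1) = 0 := by
        linear_combination K1 - K2 - r * hPQ
      have hP1 : (1 + α₄ + 2*α₂ + α₁) = 1 := by
        have h := (mul_eq_zero.mp h2P).resolve_left two_ne
        linear_combination h
      exact hD (by linear_combination K1 - (p + r + 1) * hP1)
  have hone : p = 1 := by
    by_contra hpne
    have hx : p - 1 ≠ 0 := sub_ne_zero.mpr hpne
    have ha : (p - 1) * α₄ = 0 := by
      linear_combination -E010 + (-(α₂ + 2*α₁) - (p - 1) * (1 + α₄ + 2*α₂ + α₁)) * hr0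
    have ha' : α₄ = 0 := (mul_eq_zero.mp ha).resolve_left hx
    have hb : (p - 1) * (2*α₂ + α₁) = 0 := by
      linear_combination E011 + (β₁ + (p - 1) * (1 + β₁ - α₂ - 2*α₁)) * hr0
    have hb' : 2*α₂ + α₁ = 0 := (mul_eq_zero.mp hb).resolve_left hx
    have hp0 : p ≠ 0 := by
      intro h; exact hD (by rw [hr0, h, add_zero])
    have hkey2 : (p - 1) * ((1 + α₄ + 2*α₂ + α₁) * p) = 0 := by
      linear_combination -E000 + β₁ * hr0 + (p - 1) * ha'
    have hPp : (1 + α₄ + 2*α₂ + α₁) * p = 0 := (mul_eq_zero.mp hkey2).resolve_left hx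
    have hP0 : (1 + α₄ + 2*α₂ + α₁) = 0 := (mul_eq_zero.mp hPp).resolve_right hp0
    exact one_ne_zero (α := F) (by linear_combination hP0 - ha' - hb')
  -- conclude
  have hge1 : g ![(1:F),0] = ![(1:F),0] := by
    funext i
    fin_cases i
    · simpa [← hp] using hone
    · have : q = 0 := by rw [hq1, hone]; ring
      simpa [← hq] using this
  have hge2 : g ![(0:F),1] = ![(0:F),1] := by
    funext i
    fin_cases i
    · simpa [← hr] using hr0
    · have : s = 1 := by rw [hs1, hr0]; ring
      simpa [← hs] using this
  apply LinearEquiv.ext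
  intro w
  rw [hgdec w, hge1, hge2, ← hdec w]
  rfl
end

section
/- Let F be a field with char F ≠ 2, α_1, α_2, α_4, β_1 ∈ F, and assume β_1 ≠ 2α_1 + α_2 or α_4 ≠ -α_1 - 2α_2. Then the 2-dimensional F-algebra with basis (e_1, e_2) and products e_1e_1 = α_1 e_1 + β_1 e_2, e_1e_2 = α_2 e_1 - α_1 e_2, e_2e_1 = (1+α_2) e_1 + (1-α_1) e_2, e_2e_2 = α_4 e_1 - α_2 e_2 is simple, i.e., its only two-sided ideals are {0} and the whole algebra. -/
private lemma span_top_aux {F : Type*} [Field F] (I : Submodule F (Fin 2 → F))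
    (u : Fin 2 → F) (hw : ![1, 1] ∈ I) (hu : u ∈ I) (h : u 0 ≠ u 1) : I = ⊤ := by
  rw [eq_top_iff]
  intro z _
  have hD : u 1 - u 0 ≠ 0 := sub_ne_zero.mpr h.symm
  have hz : z = ((z 0 * u 1 - z 1 * u 0) / (u 1 - u 0)) • ![1, 1]
      + ((z 1 - z 0) / (u 1 - u 0)) • u := by
    funext i
    fin_cases i <;> simp <;> field_simp <;> ring
  rw [hz]
  exact I.add_mem (I.smul_mem _ hw) (I.smul_mem _ hu)

/-- Over a field of characteristic ≠ 2, if β₁ ≠ 2α₁ + α₂ or α₄ ≠ -α₁ - 2α₂, the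
two-dimensional algebra A₁(c) with e₁e₁ = α₁e₁ + β₁e₂, e₁e₂ = α₂e₁ - α₁e₂,
e₂e₁ = (1+α₂)e₁ + (1-α₁)e₂, e₂e₂ = α₄e₁ - α₂e₂ is simple: its product is nonzero
and its only two-sided ideals are {0} and the whole algebra. -/
theorem stmt_6 {F : Type*} [Field F] (hchar : ringChar F ≠ 2)
    (α₁ α₂ α₄ β₁ : F) (hc : β₁ ≠ 2 * α₁ + α₂ ∨ α₄ ≠ -α₁ - 2 * α₂)
    (mul : (Fin 2 → F) → (Fin 2 → F) → (Fin 2 → F))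
    (hmul : ∀ x y, mul x y =
      (x 0 * y 0) • ![α₁, β₁] + (x 0 * y 1) • ![α₂, -α₁]
      + (x 1 * y 0) • ![1 + α₂, 1 - α₁] + (x 1 * y 1) • ![α₄, -α₂]) :
    (∃ x y, mul x y ≠ 0) ∧
      ∀ I : Submodule F (Fin 2 → F),
        (∀ x y, y ∈ I → mul x y ∈ I ∧ mul y x ∈ I) → I = ⊥ ∨ I = ⊤ := by
  constructor
  · by_contra h
    push_neg at h
    have h1 := h ![(1:F), 0] ![(0:F), 1]
    have h2 := h ![(0:F), 1] ![(1:F), 0]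
    have e1 := congrFun h1 0
    have e2 := congrFun h2 0
    simp [hmul] at e1 e2
    exact one_ne_zero (by linear_combination e2 - e1)
  · intro I hI
    rcases eq_or_ne I ⊥ with hbot | hbot
    · exact Or.inl hbot
    right
    obtain ⟨v, hvI, hv0⟩ := Submodule.exists_mem_ne_zero_of_ne_bot hbot
    -- (1,1) ∈ I
    have key1 : mul v ![1, 0] - mul ![1, 0] v = v 1 • ![1, 1] := by
      funext i; fin_cases i <;> simp [hmul] <;> ring
    have key2 : mul ![0, 1] v - mul v ![0, 1] = v 0 • ![1, 1] := by
      funext i; fin_cases i <;> simp [hmul] <;> ring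
    have hw : ![(1:F), 1] ∈ I := by
      rcases eq_or_ne (v 0) 0 with h0 | h0
      · have h1 : v 1 ≠ 0 := by
          intro h1
          apply hv0
          funext i; fin_cases i <;> simpa
        have hmem : v 1 • ![(1:F), 1] ∈ I := by
          rw [← key1]
          exact I.sub_mem (hI ![1, 0] v hvI).2 (hI ![1, 0] v hvI).1
        have := I.smul_mem (v 1)⁻¹ hmem
        rwa [smul_smul, inv_mul_cancel₀ h1, one_smul] at this
      · have hmem : v 0 • ![(1:F), 1] ∈ I := by
          rw [← key2]
          exact I.sub_mem (hI ![0, 1] v hvI).1 (hI ![0, 1] v hvI).2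
        have := I.smul_mem (v 0)⁻¹ hmem
        rwa [smul_smul, inv_mul_cancel₀ h0, one_smul] at this
    rcases hc with hc | hc
    · have hu : mul ![1, 0] ![1, 1] ∈ I := (hI ![1, 0] ![1, 1] hw).1
      refine span_top_aux I _ hw hu ?_
      simp [hmul]
      intro h
      exact hc (by linear_combination -h)
    · have hu : mul ![0, 1] ![1, 1] ∈ I := (hI ![0, 1] ![1, 1] hw).1
      refine span_top_aux I _ hw hu ?_
      simp [hmul]
      intro h
      exact hc (by linear_combination h)
end

section
/- Let F be a field, n ≥ 2, and let A'_2, ..., A'_n ∈ Mat((n-1) × (n-1), F) satisfy: (a) the only D' ∈ Mat((n-1) × (n-1), F) with D'A' = A'(D' ⊗ I_{n-1} + I_{n-1} ⊗ D') (where A' = (A'_2 | ... | A'_n)) is D' = 0; and (b) the block-column matrix with blocks A'_i + tr(A'_i)·I_{n-1}, for i = 2,...,n, has rank n-1. Define A = (A_1 | A_2 | ... | A_n) ∈ Mat(n × n², F) where A_1 ∈ Mat(n × n, F) is any matrix with tr(A_1) ≠ 0, and for i ≥ 2, A_i is the block matrix with (1,1)-entry -tr(A'_i), top-right block 0 (row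 of zeros), bottom-left block an arbitrary column vector ā_{i1} ∈ F^{n-1}, and bottom-right block A'_i. Then the only D ∈ Mat(n × n, F) satisfying DA = A(D ⊗ I_n + I_n ⊗ D) is D = 0. -/
open Matrix Kronecker

/-!
Contracting the derivation identity `D A = A (D ⊗ I + I ⊗ D)` along the diagonal gives
`∑ₚ tr(Aₚ) Dₚᵢ = 0` for every `i`. Since `tr(Aᵢ) = 0` for `i ≥ 2` and `tr(A₁) ≠ 0`, the first row
of `D` vanishes. The derivation identity then restricts to the lower-right block `D'` of `D`,
which is a derivation of `A'` and hence zero by (a). What is left of the identity says that the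
remaining column `d` of `D` satisfies `(A'ᵢ + tr(A'ᵢ) I) d = 0` for all `i`, so `d = 0` by (b).
-/

section

variable {F : Type*} [Field F]

theorem Matrix.eq_zero_of_mulVec_eq_zero_of_rank_eq_card {m n : Type*} [Fintype n]
    {M : Matrix m n F} (hM : M.rank = Fintype.card n) {v : n → F} (hv : M *ᵥ v = 0) : v = 0 := by
  have hker : Module.finrank F (LinearMap.ker M.mulVecLin) = 0 := by
    have := M.mulVecLin.finrank_range_add_finrank_ker
    rw [Module.finrank_fintype_fun_eq_card, ← Matrix.rank, hM] at this
    omega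
  have hv' : v ∈ LinearMap.ker M.mulVecLin := hv
  simpa [Submodule.finrank_eq_zero.mp hker] using hv'

section Derivation

variable {n : Type*} [Fintype n] [DecidableEq n]

/-- The `n × n²` matrix `(C₁ | ⋯ | Cₙ)`: its entry in row `k` and column `(i, j)` is `(Cᵢ)ₖⱼ`. -/
def structureMatrix (C : n → Matrix n n F) : Matrix n (n × n) F :=
  of fun k p => C p.1 k p.2

def IsDerivationOf (C : n → Matrix n n F) (D : Matrix n n F) : Prop :=
  D * structureMatrix C = structureMatrix C * (D ⊗ₖ 1 + 1 ⊗ₖ D)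

variable {C : n → Matrix n n F} {D : Matrix n n F}

theorem isDerivationOf_iff : IsDerivationOf C D ↔ ∀ k i j,
    ∑ l, D k l * C i l j = ∑ p, C p k j * D p i + ∑ q, C i k q * D q j := by
  simp [IsDerivationOf, ← Matrix.ext_iff, structureMatrix, mul_apply, one_apply,
    Fintype.sum_prod_type, mul_add, Finset.sum_add_distrib]

theorem IsDerivationOf.sum_trace_mul_eq_zero (hD : IsDerivationOf C D) (i : n) :
    ∑ p, (C p).trace * D p i = 0 := by
  have h : ∑ k, ∑ l, D k l * C i l k = ∑ k, (∑ p, C p k k * D p i + ∑ q, C i k q * D q k) :=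
    Finset.sum_congr rfl fun k _ => isDerivationOf_iff.mp hD k i k
  rw [Finset.sum_add_distrib, Finset.sum_comm (f := fun k q => C i k q * D q k)] at h
  simp_rw [mul_comm (D _ _)] at h
  simpa [trace, Finset.sum_mul, Finset.sum_comm (γ := n) (f := fun k p => C p k k * D p i)]
    using h

end Derivation

section Extension

variable {m : ℕ}

/-- The block matrix `[[-tr A, 0], [a, A]]`. -/
def extendBlock (A : Matrix (Fin m) (Fin m) F) (a : Fin m → F) :
    Matrix (Fin (m + 1)) (Fin (m + 1)) F :=
  of (Fin.cons (Fin.cons (-A.trace) 0) fun k => Fin.cons (a k) (A k))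

variable {A : Matrix (Fin m) (Fin m) F} {a : Fin m → F}

@[simp] theorem extendBlock_zero_zero : extendBlock A a 0 0 = -A.trace := rfl

@[simp] theorem extendBlock_zero_succ (j : Fin m) : extendBlock A a 0 j.succ = 0 := rfl

@[simp] theorem extendBlock_succ_zero (k : Fin m) : extendBlock A a k.succ 0 = a k := rfl

@[simp] theorem extendBlock_succ_succ (k j : Fin m) : extendBlock A a k.succ j.succ = A k j := rfl

@[simp] theorem trace_extendBlock : (extendBlock A a).trace = 0 := by
  simp [trace, Fin.sum_univ_succ]

variable {A' : Fin m → Matrix (Fin m) (Fin m) F} {abar : Fin m → Fin m → F}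
  {B : Fin (m + 1) → Matrix (Fin (m + 1)) (Fin (m + 1)) F}
  (hB : ∀ i, B i.succ = extendBlock (A' i) (abar i))
  {D : Matrix (Fin (m + 1)) (Fin (m + 1)) F}
include hB

theorem IsDerivationOf.row_zero_eq_zero (hD : IsDerivationOf B D) (htr : (B 0).trace ≠ 0)
    (i : Fin (m + 1)) : D 0 i = 0 := by
  have h := hD.sum_trace_mul_eq_zero i
  simp only [Fin.sum_univ_succ, hB, trace_extendBlock, zero_mul, Finset.sum_const_zero,
    add_zero] at h
  exact (mul_eq_zero.mp h).resolve_left htr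

theorem IsDerivationOf.submatrix_succ (hD : IsDerivationOf B D) (hrow : ∀ i, D 0 i = 0) :
    IsDerivationOf A' (D.submatrix Fin.succ Fin.succ) := by
  refine isDerivationOf_iff.mpr fun k i j => ?_
  have h := isDerivationOf_iff.mp hD k.succ i.succ j.succ
  simpa [Fin.sum_univ_succ, hB, hrow] using h

theorem IsDerivationOf.mulVec_col_zero_eq_zero (hD : IsDerivationOf B D) (hrow : ∀ i, D 0 i = 0)
    (hsub : D.submatrix Fin.succ Fin.succ = 0) :
    (of fun (p : Fin m × Fin m) (j : Fin m) =>
        (A' p.1 + (A' p.1).trace • (1 : Matrix (Fin m) (Fin m) F)) p.2 j) *ᵥ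
      (fun q => D q.succ 0) = 0 := by
  funext ⟨i, k⟩
  have h := isDerivationOf_iff.mp hD k.succ i.succ 0
  have hsub' (k l : Fin m) : D k.succ l.succ = 0 := congrFun (congrFun hsub k) l
  simp only [Fin.sum_univ_succ, hB, hrow, hsub', extendBlock_succ_zero, extendBlock_zero_zero,
    extendBlock_succ_succ, mul_zero, zero_mul, Finset.sum_const_zero, add_zero, zero_add] at h
  simp only [mulVec, dotProduct, Matrix.add_apply, Matrix.smul_apply, one_apply, smul_eq_mul,
    mul_ite, mul_one, mul_zero, of_apply, add_mul, ite_mul, zero_mul, Finset.sum_add_distrib,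
    Finset.sum_ite_eq, Finset.mem_univ, if_true, Pi.zero_apply]
  linear_combination -h

end Extension

end

theorem stmt_8_general {F : Type*} [Field F] (m : ℕ)
    (A' : Fin m → Matrix (Fin m) (Fin m) F)
    (ha : ∀ D' : Matrix (Fin m) (Fin m) F,
      D' * (Matrix.of fun k (p : Fin m × Fin m) => A' p.1 k p.2)
        = (Matrix.of fun k (p : Fin m × Fin m) => A' p.1 k p.2)
          * (D' ⊗ₖ (1 : Matrix (Fin m) (Fin m) F)
             + (1 : Matrix (Fin m) (Fin m) F) ⊗ₖ D') → D' = 0)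
    (hb : (Matrix.of fun (p : Fin m × Fin m) (j : Fin m) =>
        (A' p.1 + (A' p.1).trace • (1 : Matrix (Fin m) (Fin m) F)) p.2 j).rank = m)
    (A₁ : Matrix (Fin (m + 1)) (Fin (m + 1)) F) (htr : A₁.trace ≠ 0)
    (abar : Fin m → Fin m → F)
    (B : Fin (m + 1) → Matrix (Fin (m + 1)) (Fin (m + 1)) F)
    (hB0 : B 0 = A₁)
    (hBi : ∀ i : Fin m, B i.succ = Matrix.of
      (Fin.cons (Fin.cons (-(A' i).trace) (0 : Fin m → F))
        (fun k : Fin m => Fin.cons (abar i k) (A' i k)))) :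
    ∀ D : Matrix (Fin (m + 1)) (Fin (m + 1)) F,
      D * (Matrix.of fun k (p : Fin (m + 1) × Fin (m + 1)) => B p.1 k p.2)
        = (Matrix.of fun k (p : Fin (m + 1) × Fin (m + 1)) => B p.1 k p.2)
          * (D ⊗ₖ (1 : Matrix (Fin (m + 1)) (Fin (m + 1)) F)
             + (1 : Matrix (Fin (m + 1)) (Fin (m + 1)) F) ⊗ₖ D) → D = 0 := by
  intro D (hD : IsDerivationOf B D)
  have hrow := hD.row_zero_eq_zero hBi (hB0 ▸ htr)
  have hsub := ha _ (hD.submatrix_succ hBi hrow)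
  have hcol := eq_zero_of_mulVec_eq_zero_of_rank_eq_card (by rwa [Fintype.card_fin])
    (hD.mulVec_col_zero_eq_zero hBi hrow hsub)
  ext k l
  induction k using Fin.cases with
  | zero => exact hrow l
  | succ k =>
    induction l using Fin.cases with
    | zero => exact congrFun hcol k
    | succ l => exact congrFun (congrFun hsub k) l

/-- Inductive construction of an n-dimensional algebra (n = m+1 ≥ 2) with only the
trivial derivation, from an (n-1)-dimensional system A'₂,...,A'ₙ with (a) only the
trivial derivation and (b) the block-column matrix with blocks A'ᵢ + tr(A'ᵢ)·I of
rank n-1.  The new blocks are A₁ arbitrary with tr(A₁) ≠ 0, and for i ≥ 2 the block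
matrix with (1,1)-entry -tr(A'ᵢ), zero top-right row, arbitrary bottom-left column
ā i, and bottom-right block A'ᵢ. -/
theorem stmt_8 {F : Type*} [Field F] (m : ℕ) (hm : 1 ≤ m)
    (A' : Fin m → Matrix (Fin m) (Fin m) F)
    (ha : ∀ D' : Matrix (Fin m) (Fin m) F,
      D' * (Matrix.of fun k (p : Fin m × Fin m) => A' p.1 k p.2)
        = (Matrix.of fun k (p : Fin m × Fin m) => A' p.1 k p.2)
          * (D' ⊗ₖ (1 : Matrix (Fin m) (Fin m) F)
             + (1 : Matrix (Fin m) (Fin m) F) ⊗ₖ D') → D' = 0)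
    (hb : (Matrix.of fun (p : Fin m × Fin m) (j : Fin m) =>
        (A' p.1 + (A' p.1).trace • (1 : Matrix (Fin m) (Fin m) F)) p.2 j).rank = m)
    (A₁ : Matrix (Fin (m + 1)) (Fin (m + 1)) F) (htr : A₁.trace ≠ 0)
    (abar : Fin m → Fin m → F)
    (B : Fin (m + 1) → Matrix (Fin (m + 1)) (Fin (m + 1)) F)
    (hB0 : B 0 = A₁)
    (hBi : ∀ i : Fin m, B i.succ = Matrix.of
      (Fin.cons (Fin.cons (-(A' i).trace) (0 : Fin m → F))
        (fun k : Fin m => Fin.cons (abar i k) (A' i k)))) :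
    ∀ D : Matrix (Fin (m + 1)) (Fin (m + 1)) F,
      D * (Matrix.of fun k (p : Fin (m + 1) × Fin (m + 1)) => B p.1 k p.2)
        = (Matrix.of fun k (p : Fin (m + 1) × Fin (m + 1)) => B p.1 k p.2)
          * (D ⊗ₖ (1 : Matrix (Fin (m + 1)) (Fin (m + 1)) F)
             + (1 : Matrix (Fin (m + 1)) (Fin (m + 1)) F) ⊗ₖ D) → D = 0 :=
  stmt_8_general m A' ha hb A₁ htr abar B hB0 hBi
end

section
/- Let F be a field, n ≥ 2, and let A'_2, ..., A'_n ∈ Mat((n-1) × (n-1), F) satisfy: (a) the only g' ∈ GL(n-1, F) with g'A' = A'(g' ⊗ g') (where A' = (A'_2 | ... | A'_n)) is g' = I_{n-1}; and (b) the block-column matrix with blocks A'_i + tr(A'_i)·I_{n-1}, for i = 2,...,n, has rank n-1. Define A = (A_1 | A_2 | ... | A_n) ∈ Mat(n × n², F) where A_1 ∈ Mat(n × n, F) has tr(A_1) ≠ 0, and for i ≥ 2, A_i is the block matrix with (1,1)-entry -tr(A'_i), zero top-right row block, arbitrary column vector ā_{i1} ∈ F^{n-1} as bottom-left block, and A'_i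 as bottom-right block. Then the only g ∈ GL(n, F) satisfying gA = A(g ⊗ g) is g = I_n. -/
open Matrix Kronecker

/-- Inductive construction of an n-dimensional algebra (n = m+1 ≥ 2) with only the
trivial automorphism, from an (n-1)-dimensional system A'₂,...,A'ₙ with (a) only the
identity automorphism and (b) the block-column matrix with blocks A'ᵢ + tr(A'ᵢ)·I of
rank n-1.  The new blocks are A₁ arbitrary with tr(A₁) ≠ 0, and for i ≥ 2 the block
matrix with (1,1)-entry -tr(A'ᵢ), zero top-right row, arbitrary bottom-left column
ā i, and bottom-right block A'ᵢ. -/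
theorem stmt_9 {F : Type*} [Field F] (m : ℕ) (hm : 1 ≤ m)
    (A' : Fin m → Matrix (Fin m) (Fin m) F)
    (ha : ∀ g' : Matrix (Fin m) (Fin m) F, IsUnit g' →
      g' * (Matrix.of fun k (p : Fin m × Fin m) => A' p.1 k p.2)
        = (Matrix.of fun k (p : Fin m × Fin m) => A' p.1 k p.2) * (g' ⊗ₖ g')
      → g' = 1)
    (hb : (Matrix.of fun (p : Fin m × Fin m) (j : Fin m) =>
        (A' p.1 + (A' p.1).trace • (1 : Matrix (Fin m) (Fin m) F)) p.2 j).rank = m)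
    (A₁ : Matrix (Fin (m + 1)) (Fin (m + 1)) F) (htr : A₁.trace ≠ 0)
    (abar : Fin m → Fin m → F)
    (B : Fin (m + 1) → Matrix (Fin (m + 1)) (Fin (m + 1)) F)
    (hB0 : B 0 = A₁)
    (hBi : ∀ i : Fin m, B i.succ = Matrix.of
      (Fin.cons (Fin.cons (-(A' i).trace) (0 : Fin m → F))
        (fun k : Fin m => Fin.cons (abar i k) (A' i k)))) :
    ∀ g : Matrix (Fin (m + 1)) (Fin (m + 1)) F, IsUnit g →
      g * (Matrix.of fun k (p : Fin (m + 1) × Fin (m + 1)) => B p.1 k p.2)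
        = (Matrix.of fun k (p : Fin (m + 1) × Fin (m + 1)) => B p.1 k p.2)
          * (g ⊗ₖ g) → g = 1 := by
  intro g hgu hg
  have hdet : IsUnit g.det := (Matrix.isUnit_iff_isUnit_det g).mp hgu
  -- B entries
  have hB00 : ∀ i : Fin m, B i.succ 0 0 = -(A' i).trace := by intro i; simp [hBi]
  have hB0s : ∀ (i j : Fin m), B i.succ 0 j.succ = 0 := by intro i j; simp [hBi]
  have hBs0 : ∀ (i k : Fin m), B i.succ k.succ 0 = abar i k := by intro i k; simp [hBi]
  have hBss : ∀ (i k j : Fin m), B i.succ k.succ j.succ = A' i k j := by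
    intro i k j; simp [hBi]
  -- entrywise form of the automorphism equation
  have E : ∀ k i j : Fin (m+1), (∑ l, g k l * B i l j)
      = ∑ p, ∑ q, B p k q * (g p i * g q j) := by
    intro k i j
    have h := congrFun (congrFun hg k) (i, j)
    simpa [Matrix.mul_apply, Matrix.kroneckerMap_apply, Fintype.sum_prod_type] using h
  -- matrix form per i and the trace equation
  have trEq : ∀ i, (B i).trace = ∑ p, g p i * (B p).trace := by
    intro i
    have h : g * B i = (∑ p, g p i • B p) * g := by
      ext k j
      rw [Matrix.mul_apply, Matrix.mul_apply, E k i j, Finset.sum_comm]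
      refine Finset.sum_congr rfl fun q _ => ?_
      simp only [Matrix.sum_apply, Matrix.smul_apply, smul_eq_mul, Finset.sum_mul]
      exact Finset.sum_congr rfl fun p _ => by ring
    have h2 : g * B i * g⁻¹ = ∑ p, g p i • B p := by
      rw [h, mul_assoc, Matrix.mul_nonsing_inv _ hdet, mul_one]
    calc (B i).trace = (g * B i * g⁻¹).trace := by
          rw [Matrix.trace_mul_comm, ← mul_assoc, Matrix.nonsing_inv_mul _ hdet, one_mul]
      _ = (∑ p, g p i • B p).trace := by rw [h2]
      _ = ∑ p, g p i * (B p).trace := by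
          rw [Matrix.trace_sum]
          exact Finset.sum_congr rfl fun p _ => by rw [Matrix.trace_smul, smul_eq_mul]
  have tB0 : (B 0).trace = A₁.trace := by rw [hB0]
  have tBs : ∀ i : Fin m, (B i.succ).trace = 0 := by
    intro i
    simp [Matrix.trace, Matrix.diag, hBi, Fin.sum_univ_succ]
  -- first row of g
  have hg00 : g 0 0 = 1 := by
    have h := trEq 0
    rw [Fin.sum_univ_succ] at h
    simp only [tB0, tBs, mul_zero, Finset.sum_const_zero, add_zero] at h
    have h2 : g 0 0 * A₁.trace = 1 * A₁.trace := by rw [one_mul, ← h]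
    exact mul_right_cancel₀ htr h2
  have hg0s : ∀ j : Fin m, g 0 j.succ = 0 := by
    intro j
    have h := trEq j.succ
    rw [Fin.sum_univ_succ] at h
    simp only [tB0, tBs, mul_zero, Finset.sum_const_zero, add_zero] at h
    exact (mul_eq_zero.mp h.symm).resolve_right htr
  -- the lower-right block
  have hdet' : IsUnit (g.submatrix Fin.succ Fin.succ).det := by
    have hd : g.det = (g.submatrix Fin.succ Fin.succ).det := by
      rw [Matrix.det_succ_row_zero, Fin.sum_univ_succ]
      simp [hg0s, hg00, Fin.zero_succAbove]
    rwa [hd] at hdet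
  have hgsEq : g.submatrix Fin.succ Fin.succ = 1 := by
    apply ha _ ((Matrix.isUnit_iff_isUnit_det _).mpr hdet')
    ext k pj
    obtain ⟨i, j⟩ := pj
    have h := E k.succ i.succ j.succ
    simp only [Fin.sum_univ_succ] at h
    simp only [hB0s, hBss, hBs0, hB00, hg0s, mul_zero, zero_mul, zero_add, add_zero,
      Finset.sum_const_zero] at h
    simpa [Matrix.mul_apply, Matrix.kroneckerMap_apply, Fintype.sum_prod_type] using h
  have hgss : ∀ k j : Fin m, g k.succ j.succ = (1 : Matrix (Fin m) (Fin m) F) k j := by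
    intro k j
    rw [← hgsEq]; rfl
  -- the first column
  have key : ∀ (i k : Fin m), (∑ q, A' i k q * g q.succ 0) + (A' i).trace * g k.succ 0 = 0 := by
    intro i k
    have h := E k.succ i.succ 0
    have hL : (∑ l, g k.succ l * B i.succ l 0)
        = g k.succ 0 * (-(A' i).trace) + abar i k := by
      rw [Fin.sum_univ_succ, hB00]
      congr 1
      calc ∑ l : Fin m, g k.succ l.succ * B i.succ l.succ 0
          = ∑ l : Fin m, (1 : Matrix (Fin m) (Fin m) F) k l * abar i l :=
            Finset.sum_congr rfl fun l _ => by rw [hgss, hBs0]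
        _ = abar i k := by simp [Matrix.one_apply]
    have hR : (∑ p, ∑ q, B p k.succ q * (g p i.succ * g q 0))
        = abar i k + ∑ q, A' i k q * g q.succ 0 := by
      rw [Fin.sum_univ_succ]
      have h0 : ∑ q, B 0 k.succ q * (g 0 i.succ * g q 0) = 0 := by simp [hg0s]
      rw [h0, zero_add]
      calc ∑ p : Fin m, ∑ q, B p.succ k.succ q * (g p.succ i.succ * g q 0)
          = ∑ p : Fin m, (1 : Matrix (Fin m) (Fin m) F) p i
              * (∑ q, B p.succ k.succ q * g q 0) := by
            refine Finset.sum_congr rfl fun p _ => ?_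
            rw [Finset.mul_sum]
            refine Finset.sum_congr rfl fun q _ => ?_
            rw [hgss]; ring
        _ = ∑ q, B i.succ k.succ q * g q 0 := by simp [Matrix.one_apply]
        _ = abar i k + ∑ q, A' i k q * g q.succ 0 := by
            rw [Fin.sum_univ_succ, hBs0, hg00, mul_one]
            congr 1
            exact Finset.sum_congr rfl fun q _ => by rw [hBss]
    rw [hL, hR] at h
    linear_combination -h
  have hc0 : ∀ k : Fin m, g k.succ 0 = 0 := by
    set N : Matrix (Fin m × Fin m) (Fin m) F := Matrix.of fun (p : Fin m × Fin m) (j : Fin m) =>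
        (A' p.1 + (A' p.1).trace • (1 : Matrix (Fin m) (Fin m) F)) p.2 j with hN
    set c : Fin m → F := fun k => g k.succ 0 with hcdef
    have hvc : N.mulVec c = 0 := by
      funext p
      have hk := key p.1 p.2
      simp only [Matrix.mulVec, dotProduct, hN, Matrix.of_apply, Matrix.add_apply,
        Matrix.smul_apply, Matrix.one_apply, smul_eq_mul, add_mul, mul_ite, ite_mul,
        mul_one, mul_zero, zero_mul, Finset.sum_add_distrib, Finset.sum_ite_eq,
        Finset.sum_ite_eq', Finset.mem_univ, if_true, Pi.zero_apply]
      linear_combination hk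
    have h1 := LinearMap.finrank_range_add_finrank_ker N.mulVecLin
    rw [Matrix.rank] at hb
    rw [hb, Module.finrank_fintype_fun_eq_card] at h1
    simp only [Fintype.card_fin] at h1
    have hker : LinearMap.ker N.mulVecLin = ⊥ := Submodule.finrank_eq_zero.mp (by omega)
    have hmem : c ∈ LinearMap.ker N.mulVecLin := by simpa [Matrix.mulVecLin] using hvc
    rw [hker] at hmem
    intro k
    have := congrFun (Submodule.mem_bot F |>.mp hmem) k
    simpa [hcdef] using this
  -- conclude
  ext i j
  induction i using Fin.cases with
  | zero =>
    induction j using Fin.cases with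
    | zero => simpa [Matrix.one_apply] using hg00
    | succ j' => simpa [Matrix.one_apply, (Fin.succ_ne_zero j').symm] using hg0s j'
  | succ i' =>
    induction j using Fin.cases with
    | zero =>
      have := hc0 i'
      simpa [Matrix.one_apply, Fin.succ_ne_zero] using this
    | succ j' =>
      have := hgss i' j'
      simpa [Matrix.one_apply, Fin.succ_inj] using this
end

section
/- Let F be a field, n ≥ 2, and let A' = (A'_2 | ... | A'_n) ∈ Mat((n-1) × (n-1)², F) be the structure constants of a simple (n-1)-dimensional algebra such that the block-column matrix with blocks A'_i + tr(A'_i)·I_{n-1} (i = 2,...,n) has rank n-1. Let A = (A_1 | A_2 | ... | A_n) ∈ Mat(n × n², F) where A_1 = (a^i_{1j}) ∈ Mat(n × n, F) has (a^1_{12}, a^1_{13}, ..., a^1_{1n}) ≠ 0, and for i ≥ 2, A_i is the block matrix with (1,1)-entry -tr(A'_i), zero top-right block, bottom-left column ā_{i1} ∈ F^{n-1}, and bottom-right block A'_i, chosen so that the block-column matrix with blocks (ā_{i1} | A'_i + tr(A'_i)·I_{n-1}), i = 2,...,n, has rank n. Then the n-dimensional algebra with structure constants A is simple. -/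
open Matrix

/-- Inductive construction of simple algebras: if the (n-1)-dimensional algebra with
structure-constant blocks A'₂,...,A'ₙ is simple and the block-column matrix with
blocks A'ᵢ + tr(A'ᵢ)·I has rank n-1, then the n-dimensional algebra (n = m+1) with
blocks A₁ (whose first-row entries (a¹₁₂,...,a¹₁ₙ) are not all zero) and, for i ≥ 2,
the block matrix with (1,1)-entry -tr(A'ᵢ), zero top-right row, bottom-left column
ā i, bottom-right block A'ᵢ — chosen so that the block-column matrix with blocks
(ā i | A'ᵢ + tr(A'ᵢ)·I) has rank n — is simple. -/
theorem stmt_11 {F : Type*} [Field F] (m : ℕ) (hm : 1 ≤ m)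
    (A' : Fin m → Matrix (Fin m) (Fin m) F)
    (mul' : (Fin m → F) → (Fin m → F) → (Fin m → F))
    (hmul' : ∀ u v, mul' u v =
      (Matrix.of fun k (p : Fin m × Fin m) => A' p.1 k p.2).mulVec
        (fun p => u p.1 * v p.2))
    (hsimple' : (∃ u v, mul' u v ≠ 0) ∧
      ∀ I : Submodule F (Fin m → F),
        (∀ x y, y ∈ I → mul' x y ∈ I ∧ mul' y x ∈ I) → I = ⊥ ∨ I = ⊤)
    (hb : (Matrix.of fun (p : Fin m × Fin m) (j : Fin m) =>
        (A' p.1 + (A' p.1).trace • (1 : Matrix (Fin m) (Fin m) F)) p.2 j).rank = m)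
    (A₁ : Matrix (Fin (m + 1)) (Fin (m + 1)) F)
    (hA₁ : (fun j : Fin m => A₁ 0 j.succ) ≠ 0)
    (abar : Fin m → Fin m → F)
    (hb' : (Matrix.of fun (p : Fin m × Fin m) (j : Fin (m + 1)) =>
        Fin.cons (abar p.1 p.2)
          (fun j' => (A' p.1 + (A' p.1).trace • (1 : Matrix (Fin m) (Fin m) F)) p.2 j')
          j).rank = m + 1)
    (B : Fin (m + 1) → Matrix (Fin (m + 1)) (Fin (m + 1)) F)
    (hB0 : B 0 = A₁)
    (hBi : ∀ i : Fin m, B i.succ = Matrix.of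
      (Fin.cons (Fin.cons (-(A' i).trace) (0 : Fin m → F))
        (fun k : Fin m => Fin.cons (abar i k) (A' i k))))
    (mul : (Fin (m + 1) → F) → (Fin (m + 1) → F) → (Fin (m + 1) → F))
    (hmul : ∀ u v, mul u v =
      (Matrix.of fun k (p : Fin (m + 1) × Fin (m + 1)) => B p.1 k p.2).mulVec
        (fun p => u p.1 * v p.2)) :
    (∃ u v, mul u v ≠ 0) ∧
      ∀ I : Submodule F (Fin (m + 1) → F),
        (∀ x y, y ∈ I → mul x y ∈ I ∧ mul y x ∈ I) → I = ⊥ ∨ I = ⊤ := by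
  classical
  -- componentwise formulas
  have hmulk : ∀ u v k, mul u v k = ∑ i, ∑ j, B i k j * (u i * v j) := by
    intro u v k
    rw [hmul]
    simp [Matrix.mulVec, dotProduct, Fintype.sum_prod_type]
  have hmul'k : ∀ u v k, mul' u v k = ∑ i, ∑ j, A' i k j * (u i * v j) := by
    intro u v k
    rw [hmul']
    simp [Matrix.mulVec, dotProduct, Fintype.sum_prod_type]
  -- the subalgebra structure
  have keymul : ∀ u v : Fin m → F,
      mul (Fin.cons 0 u) (Fin.cons 0 v) = Fin.cons 0 (mul' u v) := by
    intro u v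
    funext k
    rw [hmulk]
    rw [Fin.sum_univ_succ]
    simp only [Fin.cons_zero, Fin.cons_succ, zero_mul, mul_zero, Finset.sum_const_zero, zero_add]
    have : ∀ i : Fin m, ∑ j, B i.succ k j * (u i * (Fin.cons 0 v : Fin (m+1) → F) j)
        = ∑ j : Fin m, B i.succ k j.succ * (u i * v j) := by
      intro i
      rw [Fin.sum_univ_succ]
      simp
    simp only [this]
    refine Fin.cases ?_ ?_ k
    · simp [hBi]
    · intro k'
      simp only [Fin.cons_succ]
      rw [hmul'k]
      simp [hBi]
  -- rank → injectivity
  set M : Matrix (Fin m × Fin m) (Fin (m+1)) F :=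
    Matrix.of fun (p : Fin m × Fin m) (j : Fin (m + 1)) =>
        (Fin.cons (abar p.1 p.2)
          (fun j' => (A' p.1 + (A' p.1).trace • (1 : Matrix (Fin m) (Fin m) F)) p.2 j')
          : Fin (m+1) → F) j with hM
  have hbM : M.rank = m + 1 := hb'
  have hinj : ∀ x : Fin (m+1) → F, M.mulVec x = 0 → x = 0 := by
    intro x hx
    have h1 := M.mulVecLin.finrank_range_add_finrank_ker
    rw [← Matrix.rank, hbM, Module.finrank_pi] at h1
    simp at h1
    have h2 : x ∈ LinearMap.ker M.mulVecLin := by simpa [Matrix.mulVecLin] using hx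
    simpa [h1] using h2
  -- product of e_{i+1} with x
  have hei : ∀ (i : Fin m) (x : Fin (m+1) → F) (k : Fin (m+1)),
      mul (Pi.single i.succ 1) x k = ∑ j, B i.succ k j * x j := by
    intro i x k
    rw [hmulk]
    rw [Finset.sum_eq_single i.succ]
    · simp
    · intro b _ hb
      simp [Pi.single_apply, hb]
    · simp
  constructor
  · obtain ⟨u, v, huv⟩ := hsimple'.1
    refine ⟨Fin.cons 0 u, Fin.cons 0 v, ?_⟩
    rw [keymul]
    intro h
    apply huv
    funext k
    have := congrFun h k.succ
    simpa using this
  intro I hI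
  by_cases hbot : I = ⊥
  · exact Or.inl hbot
  right
  obtain ⟨x, hxI, hx0⟩ := Submodule.exists_mem_ne_zero_of_ne_bot hbot
  -- the elements y i = e_{i+1} * x + tr(A' i) • x lie in I ∩ V'
  set y : Fin m → (Fin (m+1) → F) := fun i => mul (Pi.single i.succ 1) x + (A' i).trace • x with hy
  have hyI : ∀ i, y i ∈ I := fun i =>
    I.add_mem (hI (Pi.single i.succ 1) x hxI).1 (I.smul_mem _ hxI)
  have hy0 : ∀ i, y i 0 = 0 := by
    intro i
    simp only [hy, Pi.add_apply, Pi.smul_apply, smul_eq_mul]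
    rw [hei]
    rw [Fin.sum_univ_succ]
    simp [hBi]
  have hysucc : ∀ i k, y i k.succ = M.mulVec x (i, k) := by
    intro i k
    simp only [hy, Pi.add_apply, Pi.smul_apply, smul_eq_mul]
    rw [hei]
    simp only [Matrix.mulVec, dotProduct, hM, Matrix.of_apply]
    rw [Fin.sum_univ_succ, Fin.sum_univ_succ]
    simp only [Fin.cons_zero, Fin.cons_succ, hBi, Matrix.of_apply, Matrix.add_apply,
      Matrix.smul_apply, Matrix.one_apply, smul_eq_mul]
    simp only [add_mul, Finset.sum_add_distrib, ite_mul, mul_ite, mul_one, mul_zero,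
      zero_mul, Finset.sum_ite_eq, Finset.mem_univ, if_true]
    ring
  -- some y i is nonzero
  have : ∃ i, y i ≠ 0 := by
    by_contra h
    push_neg at h
    apply hx0
    apply hinj
    funext p
    have := congrFun (h p.1) p.2.succ
    rw [hysucc] at this
    simpa using this
  obtain ⟨i, hyi⟩ := this
  set w : Fin m → F := fun k => y i k.succ with hw
  have hcw : Fin.cons 0 w = y i := by
    funext k
    refine Fin.cases ?_ ?_ k
    · simp [hy0]
    · intro k'; simp [hw]
  have hwne : w ≠ 0 := by
    intro h
    apply hyi
    rw [← hcw, h]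
    funext k
    refine Fin.cases ?_ ?_ k <;> simp
  -- the ideal J in the small algebra
  let ι : (Fin m → F) →ₗ[F] (Fin (m+1) → F) :=
    { toFun := fun w => Fin.cons 0 w
      map_add' := by intro a b; funext k; refine Fin.cases ?_ ?_ k <;> simp
      map_smul' := by intro c a; funext k; refine Fin.cases ?_ ?_ k <;> simp }
  have hJ := hsimple'.2 (I.comap ι) ?_
  · rcases hJ with hJ | hJ
    · exfalso
      have : w ∈ I.comap ι := by
        simp only [Submodule.mem_comap]
        show Fin.cons 0 w ∈ I
        rw [hcw]; exact hyI i
      rw [hJ] at this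
      exact hwne this
    -- J = ⊤ : all of V' is in I
    have hV : ∀ w : Fin m → F, Fin.cons 0 w ∈ I := by
      intro w'
      have : w' ∈ I.comap ι := by rw [hJ]; trivial
      exact this
    -- find e₀
    obtain ⟨j, hj⟩ : ∃ j : Fin m, A₁ 0 j.succ ≠ 0 := by
      by_contra h
      push_neg at h
      exact hA₁ (funext h)
    set z := mul (Pi.single (0 : Fin (m+1)) 1) (Fin.cons 0 (Pi.single j 1)) with hz
    have hzI : z ∈ I := (hI _ _ (hV (Pi.single j 1))).1
    have hzk : ∀ k, z k = A₁ k j.succ := by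
      intro k
      rw [hz, hmulk]
      rw [Finset.sum_eq_single (0 : Fin (m+1))]
      · rw [Finset.sum_eq_single (j.succ : Fin (m+1))]
        · simp [hB0]
        · intro b _ hbj
          rcases Fin.eq_zero_or_eq_succ b with h | ⟨b', rfl⟩
          · simp [h]
          · have hb' : b' ≠ j := fun h => hbj (by rw [h])
            simp [Pi.single_apply, hb']
        · simp
      · intro b _ hb
        simp [Pi.single_apply, hb]
      · simp
    have he0 : (Pi.single (0 : Fin (m+1)) (1:F) : Fin (m+1) → F) ∈ I := by
      have h1 : z - (Fin.cons 0 (fun k => z k.succ) : Fin (m+1) → F) = A₁ 0 j.succ • (Pi.single (0:Fin (m+1)) (1:F) : Fin (m+1) → F) := by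
        funext k
        refine Fin.cases ?_ ?_ k
        · simp [hzk]
        · intro k'
          simp [Pi.single_apply, Fin.succ_ne_zero]
      have h2 : z - (Fin.cons 0 (fun k => z k.succ) : Fin (m+1) → F) ∈ I := I.sub_mem hzI (hV _)
      rw [h1] at h2
      have := I.smul_mem (A₁ 0 j.succ)⁻¹ h2
      rwa [smul_smul, inv_mul_cancel₀ hj, one_smul] at this
    rw [Submodule.eq_top_iff']
    intro v
    have hv : v = v 0 • (Pi.single (0:Fin (m+1)) (1:F) : Fin (m+1) → F) + (Fin.cons 0 (fun k => v k.succ) : Fin (m+1) → F) := by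
      funext k
      refine Fin.cases ?_ ?_ k
      · simp
      · intro k'
        simp [Pi.single_apply, Fin.succ_ne_zero]
    rw [hv]
    exact I.add_mem (I.smul_mem _ he0) (hV _)
  · -- J is an ideal
    intro u v hv
    simp only [Submodule.mem_comap] at hv ⊢
    constructor
    · show Fin.cons 0 (mul' u v) ∈ I
      rw [← keymul]
      exact (hI _ _ hv).1
    · show Fin.cons 0 (mul' v u) ∈ I
      rw [← keymul]
      exact (hI _ _ hv).2
end

section
/- Let F be an algebraically closed field. The set of matrices A ∈ Mat(n × n², F) such that the only D ∈ Mat(n × n, F) satisfying DA = A(D ⊗ I_n + I_n ⊗ D) is D = 0, is a nonempty Zariski-open (hence Zariski-dense) subset of Mat(n × n², F). -/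
open Matrix Kronecker

/-!
Derivations of `A` are the solutions of the linear system `M(A) vec D = 0`, so `A` has only the
zero derivation iff `M(A)` has trivial kernel, iff some `n² × n²` minor of `M(A)` is nonzero.
These minors are polynomials in the entries of `A`, which gives openness. The algebra `Fⁿ` with
pointwise product has no nonzero derivation, so the open set is nonempty. Finally, over an
infinite field a polynomial `q` vanishing wherever a nonzero `p` does not satisfies `p * q = 0`,
hence `q = 0`.
-/

theorem Matrix.mulVec_injective_iff_exists_det_submatrix_ne_zero {ρ κ K : Type*} [Fintype ρ]
    [Fintype κ] [DecidableEq κ] [Field K] (M : Matrix ρ κ K) :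
    Function.Injective M.mulVec ↔ ∃ r : κ → ρ, (M.submatrix r id).det ≠ 0 := by
  constructor
  · intro hM
    have hrank : M.rank = Fintype.card κ := by
      rw [Matrix.rank, LinearMap.finrank_range_of_inj hM, Module.finrank_fintype_fun_eq_card]
    have hspan : Submodule.span K (Set.range M.row) = ⊤ := by
      apply Submodule.eq_top_of_finrank_eq
      rw [← rank_eq_finrank_span_row, hrank, Module.finrank_fintype_fun_eq_card]
    obtain ⟨κ', a, -, hsp, hli⟩ := exists_linearIndependent' K M.row
    let e := (Pi.basisFun K κ).indexEquiv (.mk hli (by rw [hsp, hspan]))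
    refine ⟨a ∘ e, ?_⟩
    rw [← isUnit_iff_ne_zero, ← isUnit_iff_isUnit_det, ← linearIndependent_rows_iff_isUnit]
    exact hli.comp e e.injective
  · rintro ⟨r, hr⟩ v w hvw
    have hinj : Function.Injective (M.submatrix r id).mulVec := by
      rwa [mulVec_injective_iff_isUnit, isUnit_iff_isUnit_det, isUnit_iff_ne_zero]
    exact hinj (funext fun c => congrFun hvw (r c))

theorem MvPolynomial.eq_zero_of_eval_eq_zero_on_basicOpen {σ K : Type*} [CommRing K] [IsDomain K]
    [Infinite K] {p q : MvPolynomial σ K} (hp : p ≠ 0)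
    (hq : ∀ x, eval x p ≠ 0 → eval x q = 0) : q = 0 := by
  have hpq : p * q = 0 := funext fun x => by
    rw [map_mul, map_zero, mul_eq_zero, or_iff_not_imp_left]
    exact hq x
  exact (mul_eq_zero.1 hpq).resolve_left hp

theorem Matrix.mul_kronecker_one_apply {l m n R : Type*} [Fintype m] [Fintype n] [DecidableEq n]
    [CommRing R] (A : Matrix l (m × n) R) (D : Matrix m m R) (i : l) (j : m) (k : n) :
    (A * (D ⊗ₖ (1 : Matrix n n R))) i (j, k) = ∑ x, A i (x, k) * D x j := by
  simp [mul_apply, Fintype.sum_prod_type, one_apply]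

theorem Matrix.mul_one_kronecker_apply {l m n R : Type*} [Fintype m] [DecidableEq m] [Fintype n]
    [CommRing R] (A : Matrix l (m × n) R) (D : Matrix n n R) (i : l) (j : m) (k : n) :
    (A * ((1 : Matrix m m R) ⊗ₖ D)) i (j, k) = ∑ y, A i (j, y) * D y k := by
  simp [mul_apply, Fintype.sum_prod_type, one_apply]

section Derivations

variable {ι R : Type*} [DecidableEq ι] [CommRing R]

/-- The paper's `M(A)`: the entry in row `(i, (j, k))` and column `(a, b)` is the coefficient of
`D a b` in `(D * A - A * (D ⊗ₖ 1 + 1 ⊗ₖ D)) i (j, k)`. -/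
def derivCoeffMatrix (A : Matrix ι (ι × ι) R) : Matrix (ι × (ι × ι)) (ι × ι) R :=
  of fun r c => (if r.1 = c.1 then A c.2 r.2 else 0)
    - (if c.2 = r.2.1 then A r.1 (c.1, r.2.2) else 0)
    - (if c.2 = r.2.2 then A r.1 (r.2.1, c.1) else 0)

theorem derivCoeffMatrix_map {S : Type*} [CommRing S] (f : R →+* S) (A : Matrix ι (ι × ι) R) :
    (derivCoeffMatrix A).map f = derivCoeffMatrix (A.map f) := by
  ext r c
  simp [derivCoeffMatrix, apply_ite f]

variable [Fintype ι]

theorem derivCoeffMatrix_mulVec (A : Matrix ι (ι × ι) R) (D : Matrix ι ι R) :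
    derivCoeffMatrix A *ᵥ (fun c => D c.1 c.2)
      = fun r => (D * A - A * (D ⊗ₖ (1 : Matrix ι ι R) + (1 : Matrix ι ι R) ⊗ₖ D)) r.1 r.2 := by
  ext ⟨i, j, k⟩
  rw [Matrix.mul_add, Matrix.sub_apply, Matrix.add_apply, mul_kronecker_one_apply,
    mul_one_kronecker_apply, mul_apply]
  simp only [mulVec, dotProduct, derivCoeffMatrix, of_apply, Fintype.sum_prod_type, sub_mul,
    ite_mul, zero_mul, Finset.sum_sub_distrib, Finset.sum_ite_irrel, Finset.sum_const_zero,
    Finset.sum_ite_eq, Finset.sum_ite_eq', Finset.mem_univ, if_true]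
  rw [sub_sub]
  simp only [mul_comm (A _ (j, k))]

theorem injective_derivCoeffMatrix_mulVec_iff (A : Matrix ι (ι × ι) R) :
    Function.Injective (derivCoeffMatrix A).mulVec ↔ ∀ D : Matrix ι ι R,
      D * A = A * (D ⊗ₖ (1 : Matrix ι ι R) + (1 : Matrix ι ι R) ⊗ₖ D) → D = 0 := by
  rw [← coe_mulVecLin, injective_iff_map_eq_zero]
  constructor
  · intro h D hD
    have hvec := h (fun c => D c.1 c.2) <| by
      rw [coe_mulVecLin, derivCoeffMatrix_mulVec, hD, sub_self]
      rfl
    ext a b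
    exact congrFun hvec (a, b)
  · intro h v hv
    rw [coe_mulVecLin] at hv
    have hD := h (of fun a b => v (a, b)) <| sub_eq_zero.1 <| ext fun i jk =>
      congrFun ((derivCoeffMatrix_mulVec A (of fun a b => v (a, b))).symm.trans hv) (i, jk)
    ext c
    exact congrFun (congrFun hD c.1) c.2

variable (ι R) in
/-- Structure constants of `ι → R` under the pointwise product (`eⱼ eₖ = δⱼₖ eⱼ`). -/
def piStructureConstants : Matrix ι (ι × ι) R :=
  of fun i jk => if jk = (i, i) then 1 else 0

theorem piStructureConstants_derivation_eq_zero {D : Matrix ι ι R}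
    (hD : D * piStructureConstants ι R
      = piStructureConstants ι R * (D ⊗ₖ (1 : Matrix ι ι R) + (1 : Matrix ι ι R) ⊗ₖ D)) :
    D = 0 := by
  ext a b
  rw [Matrix.mul_add] at hD
  have hab := congrFun (congrFun hD a) (b, b)
  rw [Matrix.add_apply, mul_kronecker_one_apply, mul_one_kronecker_apply] at hab
  simp only [piStructureConstants, mul_apply, of_apply, Prod.mk.injEq, mul_ite, mul_one,
    mul_zero, ite_mul, zero_mul] at hab
  obtain rfl | hba := eq_or_ne b a
  · simpa using hab
  · simpa [hba] using hab

open Classical in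
variable (ι R) in
noncomputable def derivCoeffMinors : Finset (MvPolynomial (ι × (ι × ι)) R) :=
  Finset.univ.image fun r : ι × ι → ι × (ι × ι) =>
    ((derivCoeffMatrix (mvPolynomialX ι (ι × ι) R)).submatrix r id).det

theorem eval_det_submatrix_derivCoeffMatrix (A : Matrix ι (ι × ι) R) (r : ι × ι → ι × (ι × ι)) :
    MvPolynomial.eval (fun q => A q.1 q.2)
        ((derivCoeffMatrix (mvPolynomialX ι (ι × ι) R)).submatrix r id).det
      = ((derivCoeffMatrix A).submatrix r id).det := by
  rw [RingHom.map_det, RingHom.mapMatrix_apply, ← submatrix_map, derivCoeffMatrix_map]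
  congr
  exact mvPolynomialX_map_eval₂ _ A

theorem exists_derivCoeffMinors_eval_ne_zero_iff {K : Type*} [Field K]
    (A : Matrix ι (ι × ι) K) :
    (∃ p ∈ derivCoeffMinors ι K, MvPolynomial.eval (fun q => A q.1 q.2) p ≠ 0) ↔
      ∀ D : Matrix ι ι K,
        D * A = A * (D ⊗ₖ (1 : Matrix ι ι K) + (1 : Matrix ι ι K) ⊗ₖ D) → D = 0 := by
  simp only [derivCoeffMinors, Finset.mem_image, Finset.mem_univ, true_and,
    exists_exists_eq_and, eval_det_submatrix_derivCoeffMatrix]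
  rw [← mulVec_injective_iff_exists_det_submatrix_ne_zero, injective_derivCoeffMatrix_mulVec_iff]

end Derivations

/-- Over an algebraically closed field, the set of structure-constant matrices A
whose algebra has only the trivial derivation is a nonempty Zariski-open subset of
Mat(n × n², F) (it is the complement of the common zero locus of finitely many
polynomials in the entries), and hence Zariski-dense (no nonzero polynomial
vanishes identically on it). -/
theorem stmt_13 {F : Type*} [Field F] [IsAlgClosed F] (n : ℕ)
    (S : Set (Matrix (Fin n) (Fin n × Fin n) F))
    (hS : S = {A | ∀ D : Matrix (Fin n) (Fin n) F,
      D * A = A * (D ⊗ₖ (1 : Matrix (Fin n) (Fin n) F)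
        + (1 : Matrix (Fin n) (Fin n) F) ⊗ₖ D) → D = 0}) :
    S.Nonempty ∧
    (∃ P : Finset (MvPolynomial (Fin n × (Fin n × Fin n)) F),
      S = {A | ∃ p ∈ P, MvPolynomial.eval (fun q => A q.1 q.2) p ≠ 0}) ∧
    (∀ q : MvPolynomial (Fin n × (Fin n × Fin n)) F,
      (∀ A ∈ S, MvPolynomial.eval (fun i => A i.1 i.2) q = 0) → q = 0) := by
  have hS' : S = {A | ∃ p ∈ derivCoeffMinors (Fin n) F,
      MvPolynomial.eval (fun q => A q.1 q.2) p ≠ 0} := by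
    rw [hS]
    ext A
    exact (exists_derivCoeffMinors_eval_ne_zero_iff A).symm
  have hpi : piStructureConstants (Fin n) F ∈ S := by
    rw [hS]
    exact fun D => piStructureConstants_derivation_eq_zero
  obtain ⟨p, hp, hp_eval⟩ := hS' ▸ hpi
  refine ⟨⟨_, hpi⟩, ⟨_, hS'⟩, fun q hq => ?_⟩
  refine MvPolynomial.eq_zero_of_eval_eq_zero_on_basicOpen (p := p) ?_ fun x hx => ?_
  · rintro rfl
    exact hp_eval (map_zero _)
  · exact hq (of fun i jk => x (i, jk)) (hS' ▸ ⟨p, hp, hx⟩)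
end

section
/- Let F be a field with char F ≠ 2, β_1 ∈ F nonzero, such that t³ - β_1 has no root in F and the only d ∈ F with d³ = 1 is d = 1. Then the 2-dimensional F-algebra with basis (e_1, e_2) and products e_1e_1 = β_1 e_2, e_1e_2 = 0, e_2e_1 = 0, e_2e_2 = e_1 has only the identity automorphism. -/
/-- Over a field of characteristic ≠ 2, if β₁ ≠ 0, the polynomial t³ - β₁ has no
root in F, and 1 is the only cube root of unity in F, then the two-dimensional
algebra with e₁e₁ = β₁e₂, e₁e₂ = 0, e₂e₁ = 0, e₂e₂ = e₁ has only the identity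
automorphism. -/
theorem stmt_16 {F : Type*} [Field F] (hchar : ringChar F ≠ 2)
    (β₁ : F) (hβ₁ : β₁ ≠ 0) (hroot : ∀ t : F, t ^ 3 ≠ β₁)
    (hcube : ∀ d : F, d ^ 3 = 1 → d = 1)
    (mul : (Fin 2 → F) → (Fin 2 → F) → (Fin 2 → F))
    (hmul : ∀ x y, mul x y =
      (x 0 * y 0) • ![(0 : F), β₁] + (x 1 * y 1) • ![(1 : F), 0])
    (g : (Fin 2 → F) ≃ₗ[F] (Fin 2 → F))
    (hg : ∀ x y, g (mul x y) = mul (g x) (g y)) :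
    g = LinearEquiv.refl F (Fin 2 → F) := by
  set e1 : Fin 2 → F := ![1, 0] with he1
  set e2 : Fin 2 → F := ![0, 1] with he2
  set a : F := g e1 0 with ha
  set b : F := g e1 1 with hb
  set c : F := g e2 0 with hc
  set d : F := g e2 1 with hd
  have harg11 : mul e1 e1 = β₁ • e2 := by
    rw [hmul]; ext i; fin_cases i <;> simp [he1, he2]
  have harg22 : mul e2 e2 = e1 := by
    rw [hmul]; ext i; fin_cases i <;> simp [he1, he2]
  have harg12 : mul e1 e2 = 0 := by
    rw [hmul]; ext i; fin_cases i <;> simp [he1, he2]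
  have h11 := hg e1 e1
  have h22 := hg e2 e2
  have h12 := hg e1 e2
  rw [harg11, map_smul] at h11
  rw [harg22] at h22
  rw [harg12, map_zero] at h12
  conv_rhs at h11 => rw [hmul]
  conv_rhs at h22 => rw [hmul]
  rw [hmul] at h12
  have e11_0 := congrFun h11 0
  have e11_1 := congrFun h11 1
  have e22_0 := congrFun h22 0
  have e22_1 := congrFun h22 1
  have e12_0 := congrFun h12 0
  have e12_1 := congrFun h12 1
  simp only [Pi.add_apply, Pi.smul_apply, Pi.zero_apply, Matrix.cons_val_zero,
    Matrix.cons_val_one, Matrix.head_cons, smul_eq_mul, ← ha, ← hb, ← hc, ← hd] at e11_0 e11_1 e22_0 e22_1 e12_0 e12_1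
  -- e11_0 : β₁ * c = a * a * 0 + b * b * 1  etc
  have he10 : e1 0 = 1 := rfl
  have he11 : e1 1 = 0 := rfl
  simp only [he10, he11, mul_one, mul_zero, add_zero, zero_add] at e11_0 e11_1 e22_0 e22_1 e12_0 e12_1
  -- e11_0 : β₁ * c = b * b ; e11_1 : β₁ * d = a * a * β₁
  -- e22_0 : a = d * d ; e22_1 : b = c * c * β₁
  -- e12_0 : 0 = b * d ; e12_1 : 0 = a * c * β₁
  have hc0 : c = 0 := by
    by_contra hcne
    apply hroot c⁻¹
    have key : β₁ * c = (c * c * β₁) * (c * c * β₁) := by rw [← e22_1, ← e11_0]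
    have h1 : β₁ * (c * c * c) = 1 := by
      have h2 : (β₁ * c) * (β₁ * (c * c * c)) = (β₁ * c) * 1 := by linear_combination -key
      exact mul_left_cancel₀ (mul_ne_zero hβ₁ hcne) h2
    field_simp
    linear_combination -h1
  have hb0 : b = 0 := by rw [e22_1, hc0]; ring
  have hda : d = a * a :=
    mul_left_cancel₀ hβ₁ (by linear_combination e11_1)
  have hane : a ≠ 0 := by
    intro ha0
    have hz : g e1 = 0 := by
      ext i; fin_cases i
      · show g e1 0 = 0; rw [← ha, ha0]
      · show g e1 1 = 0; rw [← hb, hb0]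
    have := g.injective (by rw [hz, map_zero] : g e1 = g 0)
    have := congrFun this 0
    simp [he1] at this
  have ha3 : a ^ 3 = 1 := by
    have h4 : a = (a * a) * (a * a) := by rw [← hda, ← e22_0]
    have h2 : a * a ^ 3 = a * 1 := by linear_combination -h4
    exact mul_left_cancel₀ hane h2
  have ha1 : a = 1 := hcube a ha3
  have hd1 : d = 1 := by rw [hda, ha1]; ring
  have hge1 : g e1 = e1 := by
    ext i; fin_cases i
    · show g e1 0 = e1 0; rw [← ha, ha1, he10]
    · show g e1 1 = e1 1; rw [← hb, hb0, he11]
  have hge2 : g e2 = e2 := by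
    ext i; fin_cases i
    · show g e2 0 = e2 0; rw [← hc, hc0]; rfl
    · show g e2 1 = e2 1; rw [← hd, hd1]; rfl
  apply LinearEquiv.ext
  intro x
  have hx : x = x 0 • e1 + x 1 • e2 := by
    ext i; fin_cases i <;> simp [he1, he2]
  conv_lhs => rw [hx]
  rw [map_add, map_smul, map_smul, hge1, hge2]
  simp only [LinearEquiv.refl_apply]
  exact hx.symm
end

section
/- Let F be a field with char F ≠ 2 and β_1 ∈ F with β_1 ≠ 0 such that t³ - β_1 has no root in F. Then the 2-dimensional F-algebra with basis (e_1, e_2) and products e_1e_1 = β_1 e_2, e_1e_2 = 0, e_2e_1 = 0, e_2e_2 = e_1 is simple. -/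
/-! Every nonzero left ideal contains `e₂`: a vector with nonzero first coordinate is sent to
a nonzero multiple of `e₂` by left multiplication with `e₁`, and a vector
with vanishing first coordinate already is one. Then `e₁ = e₂e₂` lies in the ideal as well. -/

namespace TwoDimAlgebra

variable {F : Type*} [Field F]

/-- A vector `x` stands for `x 0 • e₁ + x 1 • e₂`. -/
def mulOf (β : F) (x y : Fin 2 → F) : Fin 2 → F :=
  (x 0 * y 0) • ![0, β] + (x 1 * y 1) • ![1, 0]

theorem mulOf_e₁_left (β : F) (y : Fin 2 → F) :
    mulOf β ![1, 0] y = (y 0 * β) • ![0, 1] := by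
  ext i
  fin_cases i <;> simp [mulOf]

theorem mulOf_e₂_e₂ (β : F) : mulOf β ![0, 1] ![0, 1] = ![1, 0] := by
  ext i
  fin_cases i <;> simp [mulOf]

theorem eq_smul_e₂_of_apply_zero {v : Fin 2 → F} (hv : v 0 = 0) : v = v 1 • ![0, 1] := by
  ext i
  fin_cases i <;> simp [hv]

variable {β : F} {I : Submodule F (Fin 2 → F)}

theorem e₂_mem_of_ne_bot (hβ : β ≠ 0) (hI : ∀ x, ∀ y ∈ I, mulOf β x y ∈ I) (hbot : I ≠ ⊥) :
    ![0, 1] ∈ I := by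
  obtain ⟨v, hv, hv0⟩ := Submodule.exists_mem_ne_zero_of_ne_bot hbot
  by_cases h0 : v 0 = 0
  · have h1 : v 1 ≠ 0 := fun h1 => hv0 (by rw [eq_smul_e₂_of_apply_zero h0, h1, zero_smul])
    rw [eq_smul_e₂_of_apply_zero h0] at hv
    simpa [smul_smul, h1] using I.smul_mem (v 1)⁻¹ hv
  · have hm := I.smul_mem (v 0 * β)⁻¹ (hI ![1, 0] v hv)
    rwa [mulOf_e₁_left, smul_smul, inv_mul_cancel₀ (mul_ne_zero h0 hβ), one_smul] at hm

theorem eq_top_of_e₂_mem (hI : ∀ x, ∀ y ∈ I, mulOf β x y ∈ I) (he₂ : ![0, 1] ∈ I) :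
    I = ⊤ := by
  have he₁ : ![1, 0] ∈ I := mulOf_e₂_e₂ β ▸ hI _ _ he₂
  refine Submodule.eq_top_iff'.2 fun x => ?_
  have hx : x = x 0 • ![1, 0] + x 1 • ![0, 1] := by
    ext i
    fin_cases i <;> simp
  rw [hx]
  exact I.add_mem (I.smul_mem _ he₁) (I.smul_mem _ he₂)

end TwoDimAlgebra

open TwoDimAlgebra in
theorem stmt_17_general {F : Type*} [Field F]
    (β₁ : F) (hβ₁ : β₁ ≠ 0)
    (mul : (Fin 2 → F) → (Fin 2 → F) → (Fin 2 → F))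
    (hmul : ∀ x y, mul x y =
      (x 0 * y 0) • ![(0 : F), β₁] + (x 1 * y 1) • ![(1 : F), 0]) :
    (∃ x y, mul x y ≠ 0) ∧
      ∀ I : Submodule F (Fin 2 → F),
        (∀ x y, y ∈ I → mul x y ∈ I ∧ mul y x ∈ I) → I = ⊥ ∨ I = ⊤ := by
  obtain rfl : mul = mulOf β₁ := funext fun x => funext (hmul x)
  refine ⟨⟨![1, 0], ![1, 0], ?_⟩, fun I hI => or_iff_not_imp_left.2 fun hbot => ?_⟩
  · simp [mulOf_e₁_left, hβ₁]
  · have hleft : ∀ x, ∀ y ∈ I, mulOf β₁ x y ∈ I := fun x y hy => (hI x y hy).1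
    exact eq_top_of_e₂_mem hleft (e₂_mem_of_ne_bot hβ₁ hleft hbot)

/-- Over a field of characteristic ≠ 2, if β₁ ≠ 0 and t³ - β₁ has no root in F,
the two-dimensional algebra with e₁e₁ = β₁e₂, e₁e₂ = 0, e₂e₁ = 0, e₂e₂ = e₁ is
simple: its product is nonzero and its only two-sided ideals are {0} and the
whole algebra. -/
theorem stmt_17 {F : Type*} [Field F] (hchar : ringChar F ≠ 2)
    (β₁ : F) (hβ₁ : β₁ ≠ 0) (hroot : ∀ t : F, t ^ 3 ≠ β₁)
    (mul : (Fin 2 → F) → (Fin 2 → F) → (Fin 2 → F))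
    (hmul : ∀ x y, mul x y =
      (x 0 * y 0) • ![(0 : F), β₁] + (x 1 * y 1) • ![(1 : F), 0]) :
    (∃ x y, mul x y ≠ 0) ∧
      ∀ I : Submodule F (Fin 2 → F),
        (∀ x y, y ∈ I → mul x y ∈ I ∧ mul y x ∈ I) → I = ⊥ ∨ I = ⊤ :=
  stmt_17_general β₁ hβ₁ mul hmul
end

section
/- Let F be a field with char F ≠ 2 and β_1, β_2 ∈ F with β_2 ≠ 1. Then the 2-dimensional F-algebra with basis (e_1, e_2) and products e_1e_1 = β_1 e_2, e_1e_2 = e_1 + β_2 e_2, e_2e_1 = e_1 + e_2, e_2e_2 = -e_2 (structure constants A_4(β_1, β_2) = ((0,1,1,0),(β_1,β_2,1,-1))) is simple. -/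
/-- Over a field of characteristic ≠ 2, if β₂ ≠ 1, the two-dimensional algebra
A₄(β₁, β₂) with e₁e₁ = β₁e₂, e₁e₂ = e₁ + β₂e₂, e₂e₁ = e₁ + e₂, e₂e₂ = -e₂ is
simple: its product is nonzero and its only two-sided ideals are {0} and the
whole algebra. -/
theorem stmt_18 {F : Type*} [Field F] (hchar : ringChar F ≠ 2)
    (β₁ β₂ : F) (hβ₂ : β₂ ≠ 1)
    (mul : (Fin 2 → F) → (Fin 2 → F) → (Fin 2 → F))
    (hmul : ∀ x y, mul x y =
      (x 0 * y 0) • ![(0 : F), β₁] + (x 0 * y 1) • ![(1 : F), β₂]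
      + (x 1 * y 0) • ![(1 : F), 1] + (x 1 * y 1) • ![(0 : F), -1]) :
    (∃ x y, mul x y ≠ 0) ∧
      ∀ I : Submodule F (Fin 2 → F),
        (∀ x y, y ∈ I → mul x y ∈ I ∧ mul y x ∈ I) → I = ⊥ ∨ I = ⊤ := by
  constructor
  · refine ⟨![0,1], ![0,1], fun h => ?_⟩
    have := congrFun h 1
    rw [hmul] at this
    simp at this
  · intro I hI
    by_cases hbot : I = ⊥
    · exact Or.inl hbot
    right
    obtain ⟨v, hv, hv0⟩ := Submodule.ne_bot_iff I |>.mp hbot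
    -- e₂ ∈ I
    have he2 : (![0,1] : Fin 2 → F) ∈ I := by
      by_cases ha : v 0 = 0
      · have hb : v 1 ≠ 0 := by
          intro hb
          apply hv0
          funext i; fin_cases i <;> simpa [ha]
        have : (v 1)⁻¹ • v ∈ I := I.smul_mem _ hv
        have heq : (v 1)⁻¹ • v = ![0,1] := by
          funext i; fin_cases i <;>
            simp [ha, Pi.smul_apply, inv_mul_cancel₀ hb]
        rwa [heq] at this
      · have h1 : mul ![0,1] v ∈ I := (hI ![0,1] v hv).1
        have h2 : mul v ![0,1] ∈ I := by
          have := (hI ![0,1] v hv).2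
          exact this
        have hd : mul ![0,1] v - mul v ![0,1] = (v 0 * (1 - β₂)) • ![0,1] := by
          rw [hmul, hmul]
          funext i; fin_cases i <;> simp <;> ring
        have hmem : (v 0 * (1 - β₂)) • (![0,1] : Fin 2 → F) ∈ I := by
          rw [← hd]; exact I.sub_mem h1 h2
        have hne : v 0 * (1 - β₂) ≠ 0 :=
          mul_ne_zero ha (sub_ne_zero.mpr fun h => hβ₂ h.symm)
        have := I.smul_mem (v 0 * (1 - β₂))⁻¹ hmem
        rwa [smul_smul, inv_mul_cancel₀ hne, one_smul] at this
    -- e₁ ∈ I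
    have he1 : (![1,0] : Fin 2 → F) ∈ I := by
      have h1 : mul ![1,0] ![0,1] ∈ I := (hI ![1,0] ![0,1] he2).1
      have hd : mul ![1,0] ![0,1] - β₂ • ![0,1] = ![1,0] := by
        rw [hmul]
        funext i; fin_cases i <;> simp
      rw [← hd]
      exact I.sub_mem h1 (I.smul_mem _ he2)
    -- conclude
    rw [Submodule.eq_top_iff']
    intro x
    have : x = x 0 • ![1,0] + x 1 • ![0,1] := by
      funext i; fin_cases i <;> simp
    rw [this]
    exact I.add_mem (I.smul_mem _ he1) (I.smul_mem _ he2)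
end
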